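/- Reduction from balanced biclique to accurate rules: let G = (V₁, V₂, E) be a finite bipartite graph with E ⊆ V₁ × V₂, and let k ≥ 1 be a natural number. Then G contains a balanced biclique of size k — i.e., there exist T ⊆ V₁ and S ⊆ V₂ with |T| = |S| = k such that (v, u) ∈ E for every v ∈ T and u ∈ S — if and only if there exists a set X ⊆ V₂ with |X| ≥ k such that |{v ∈ V₁ : (v, u) ∈ E for all u ∈ X}| ≥ k. Equivalently, in the labeled dataset having one positive record N(v) = {u ∈ V₂ : (v,u) ∈ E} for each v ∈ V₁ and one negative record equal to V₂, G contains a balanced biclique of size k if and only if there is a positive rule with at least k items and accuracy at least k/(k+1). -/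

import Mathlib

/-!
A biclique `T × S` with `|T| = |S| = k` gives the rule body `X = S`, whose common neighbourhood
contains `T`; conversely any `k` items of `X` and `k` vertices of its common neighbourhood form
a biclique. The single negative record `V₂` is covered by every body `X ⊆ V₂`, so a body with
`c` positive covers has accuracy `c / (c + 1)`, and `x ↦ x / (x + 1)` is strictly increasing.
-/

open Finset

theorem Finset.subset_filter_iff {β : Type*} {p : β → Prop} [DecidablePred p]
    {s X : Finset β} : X ⊆ s.filter p ↔ X ⊆ s ∧ ∀ u ∈ X, p u := by
  simp only [subset_iff, mem_filter]
  exact ⟨fun h => ⟨fun _ hu => (h hu).1, fun _ hu => (h hu).2⟩,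
    fun h _ hu => ⟨h.1 hu, h.2 _ hu⟩⟩

theorem div_add_one_le_div_add_one_iff {K : Type*} [Field K] [LinearOrder K]
    [IsStrictOrderedRing K] {a b : K} (ha : 0 ≤ a) (hb : 0 ≤ b) :
    a / (a + 1) ≤ b / (b + 1) ↔ a ≤ b := by
  rw [div_le_div_iff₀ (by positivity) (by positivity)]
  constructor <;> intro h <;> nlinarith

theorem exists_biclique_iff_exists_card_commonNeighbors {α β : Type*} (r : α → β → Prop)
    [DecidableRel r] (V₁ : Finset α) (V₂ : Finset β) (k : ℕ) :
    (∃ T ⊆ V₁, ∃ S ⊆ V₂, #T = k ∧ #S = k ∧ ∀ v ∈ T, ∀ u ∈ S, r v u) ↔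
      ∃ X ⊆ V₂, k ≤ #X ∧ k ≤ #(V₁.filter fun v => ∀ u ∈ X, r v u) := by
  constructor
  · rintro ⟨T, hTV, S, hSV, rfl, hS, hTS⟩
    refine ⟨S, hSV, hS.ge, card_le_card fun v hv => mem_filter.2 ⟨hTV hv, hTS v hv⟩⟩
  · rintro ⟨X, hXV, hX, hN⟩
    obtain ⟨S, hSX, hS⟩ := exists_subset_card_eq hX
    obtain ⟨T, hTN, hT⟩ := exists_subset_card_eq hN
    exact ⟨T, fun v hv => (mem_filter.1 (hTN hv)).1, S, hSX.trans hXV, hT, hS,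
      fun v hv u hu => (mem_filter.1 (hTN hv)).2 u (hSX hu)⟩

theorem biclique_to_accurate_rule_general {α β : Type*} [DecidableEq α] [DecidableEq β]
    (V₁ : Finset α) (V₂ : Finset β) (E : Finset (α × β))
    (k : ℕ) :
    ((∃ T ⊆ V₁, ∃ S ⊆ V₂, T.card = k ∧ S.card = k ∧
        ∀ v ∈ T, ∀ u ∈ S, (v, u) ∈ E) ↔
      (∃ X ⊆ V₂, k ≤ X.card ∧
        k ≤ (V₁.filter fun v => ∀ u ∈ X, (v, u) ∈ E).card)) ∧
    ((∃ T ⊆ V₁, ∃ S ⊆ V₂, T.card = k ∧ S.card = k ∧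
        ∀ v ∈ T, ∀ u ∈ S, (v, u) ∈ E) ↔
      (∃ X ⊆ V₂, k ≤ X.card ∧
        (k : ℝ) / (k + 1) ≤
          (((V₁.filter fun v => X ⊆ V₂.filter fun u => (v, u) ∈ E).card : ℝ) /
            ((V₁.filter fun v => X ⊆ V₂.filter fun u => (v, u) ∈ E).card + 1)))) := by
  have biclique_iff :=
    exists_biclique_iff_exists_card_commonNeighbors (fun v u => (v, u) ∈ E) V₁ V₂ k
  refine ⟨biclique_iff, biclique_iff.trans <| exists_congr fun X => ?_⟩
  refine and_congr_right fun hXV => and_congr_right fun _ => ?_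
  have covers_eq : (V₁.filter fun v => X ⊆ V₂.filter fun u => (v, u) ∈ E) =
      V₁.filter fun v => ∀ u ∈ X, (v, u) ∈ E :=
    filter_congr fun _ _ => subset_filter_iff.trans (and_iff_right hXV)
  rw [covers_eq, div_add_one_le_div_add_one_iff (by positivity) (by positivity), Nat.cast_le]

/-- Reduction from balanced biclique to accurate rules.  A bipartite graph
`(V₁, V₂, E)` with `E ⊆ V₁ × V₂` contains a balanced biclique of size `k ≥ 1`
iff there is a set `X ⊆ V₂` with `|X| ≥ k` whose common neighbourhood in `V₁`
has size at least `k`; equivalently, in the dataset with one positive record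
`N(v) = {u ∈ V₂ : (v,u) ∈ E}` per `v ∈ V₁` and one negative record `V₂`,
iff there is a positive rule with at least `k` items and accuracy at least
`k/(k+1)`. -/
theorem biclique_to_accurate_rule {α β : Type*} [DecidableEq α] [DecidableEq β]
    (V₁ : Finset α) (V₂ : Finset β) (E : Finset (α × β)) (hE : E ⊆ V₁ ×ˢ V₂)
    (k : ℕ) (hk : 1 ≤ k) :
    ((∃ T ⊆ V₁, ∃ S ⊆ V₂, T.card = k ∧ S.card = k ∧
        ∀ v ∈ T, ∀ u ∈ S, (v, u) ∈ E) ↔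
      (∃ X ⊆ V₂, k ≤ X.card ∧
        k ≤ (V₁.filter fun v => ∀ u ∈ X, (v, u) ∈ E).card)) ∧
    ((∃ T ⊆ V₁, ∃ S ⊆ V₂, T.card = k ∧ S.card = k ∧
        ∀ v ∈ T, ∀ u ∈ S, (v, u) ∈ E) ↔
      (∃ X ⊆ V₂, k ≤ X.card ∧
        (k : ℝ) / (k + 1) ≤
          (((V₁.filter fun v => X ⊆ V₂.filter fun u => (v, u) ∈ E).card : ℝ) /
            ((V₁.filter fun v => X ⊆ V₂.filter fun u => (v, u) ∈ E).card + 1)))) :=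
  biclique_to_accurate_rule_general V₁ V₂ E k
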